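/- For every integer m ≥ 2: (a) the maximum cardinality of a partial 4-spread in 𝔽_2^{4m} equals (2^{4m} − 1)/15; (b) the maximum cardinality of a partial 4-spread in 𝔽_2^{4m+1} equals (2^{4m+1} − 17)/15; (c) the maximum cardinality of a partial 4-spread in 𝔽_2^{4m+2} equals (2^{4m+2} − 49)/15; (d) the maximum cardinality A of a partial 4-spread in 𝔽_2^{4m+3} satisfies (2^{4m+3} − 113)/15 ≤ A ≤ (2^{4m+3} − 53)/15. -/

import Mathlib

/-!
Let `S` be a partial `4`-spread in `𝔽_2^v` and `H` the set of nonzero vectors it leaves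
uncovered, so that `15 |S| + |H| = 2^v - 1`. A nonzero functional `b` equals `1` on `2^(v-1)`
vectors of `𝔽_2^v` and on `0` or `8` vectors of each member of `S`, so the weight
`w(b) = #{x ∈ H | b ⬝ x = 1}` is divisible by `8` for every `b`. The sums of `w` and `w²` over all
`b` depend only on `|H|`, hence `∑_b (w(b) - c)(w(b) - d) ≥ 0`, for consecutive multiples `c < d`
of `8`, is an inequality in `|H|` alone. Together with the fact that `H ∩ ker b` is `4`-divisible
of size `|H| - w(b)`, this excludes `|H| ∈ {1, 3, 7, 18, 22, 33, 37}`: the upper bounds.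

For the lower bounds, if `ι : 𝔽_2^4 → 𝔽_{2^N}` is injective, the graphs of `x ↦ a ι(x)`,
`a ∈ 𝔽_{2^N}`, are `2^N` subspaces of `𝔽_2^4 × 𝔽_{2^N}` meeting each other and `0 × 𝔽_{2^N}`
trivially; adding a partial spread of `0 × 𝔽_{2^N}` and recursing on `N` gives the construction.
-/

/-- A partial `k`-spread in `𝔽_2^n`: a set of `k`-dimensional subspaces
any two distinct members of which intersect trivially. -/
def IsPartialSpread {n : ℕ} (k : ℕ)
    (S : Finset (Submodule (ZMod 2) (Fin n → ZMod 2))) : Prop :=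
  (∀ U ∈ S, Module.finrank (ZMod 2) U = k) ∧
  ∀ U ∈ S, ∀ V ∈ S, U ≠ V → U ⊓ V = ⊥

open Finset Matrix Module

/-- `IsPartialSpread` in an arbitrary vector space, so that the construction can pass through
`𝔽_p^k × 𝔽_{p^N}`. -/
def IsPartialSpreadOver (K : Type*) {V : Type*} [Field K] [AddCommGroup V] [Module K V] (k : ℕ)
    (S : Finset (Submodule K V)) : Prop :=
  (∀ U ∈ S, finrank K U = k) ∧ (S : Set (Submodule K V)).Pairwise Disjoint

theorem isPartialSpread_iff {n k : ℕ} {S : Finset (Submodule (ZMod 2) (Fin n → ZMod 2))} :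
    IsPartialSpread k S ↔ IsPartialSpreadOver (ZMod 2) k S := by
  simp [IsPartialSpread, IsPartialSpreadOver, Set.Pairwise, disjoint_iff]

theorem Nat.two_pow_pred_dvd_of_dvd_two_mul {j n : ℕ} (h : 2 ^ j ∣ 2 * n) : 2 ^ (j - 1) ∣ n := by
  cases j with
  | zero => exact one_dvd n
  | succ j => rwa [pow_succ', Nat.mul_dvd_mul_iff_left two_pos] at h

namespace PartialSpread

theorem two_mul_sum_val_eq_card {G : Type*} [AddCommGroup G] [Fintype G] (f : G → ZMod 2)
    (g₀ : G) (hf : ∀ g, f (g + g₀) = f g + 1) : 2 * ∑ g, (f g).val = Fintype.card G := by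
  have hval : ∀ t : ZMod 2, t.val + (t + 1).val = 1 := by decide
  calc 2 * ∑ g, (f g).val = ∑ g, (f g).val + ∑ g, (f (g + g₀)).val := by
        rw [two_mul, Fintype.sum_equiv (Equiv.addRight g₀) (fun g => (f (g + g₀)).val)
          (fun g => (f g).val) fun _ => rfl]
    _ = Fintype.card G := by simp [hf, ← sum_add_distrib, hval]

variable {v : ℕ}

theorem two_mul_sum_val_dotProduct {x : Fin v → ZMod 2} (hx : x ≠ 0) :
    2 * ∑ a, (a ⬝ᵥ x).val = 2 ^ v := by
  obtain ⟨i, hi⟩ := Function.ne_iff.mp hx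
  have hxi : x i = 1 := by
    have h01 : ∀ t : ZMod 2, t ≠ 0 → t = 1 := by decide
    exact h01 _ hi
  rw [two_mul_sum_val_eq_card _ (Pi.single i 1) fun a => by
    rw [add_dotProduct, single_dotProduct, one_mul, hxi]]
  simp

theorem four_mul_sum_val_mul_val {x y : Fin v → ZMod 2} (hx : x ≠ 0) (hy : y ≠ 0) :
    4 * ∑ a, (a ⬝ᵥ x).val * (a ⬝ᵥ y).val = 2 ^ v + if x = y then 2 ^ v else 0 := by
  have hx' := two_mul_sum_val_dotProduct hx
  by_cases hxy : x = y
  · have hval : ∀ t : ZMod 2, t.val * t.val = t.val := by decide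
    simp only [← hxy, hval, if_true]
    omega
  have hval : ∀ s t : ZMod 2, 2 * (s.val * t.val) + (s - t).val = s.val + t.val := by decide
  have hy' := two_mul_sum_val_dotProduct hy
  have hxy' := two_mul_sum_val_dotProduct (sub_ne_zero.mpr hxy)
  have key : 2 * ∑ a, (a ⬝ᵥ x).val * (a ⬝ᵥ y).val + ∑ a, (a ⬝ᵥ (x - y)).val =
      ∑ a, (a ⬝ᵥ x).val + ∑ a, (a ⬝ᵥ y).val := by
    simp only [mul_sum, ← sum_add_distrib, dotProduct_sub, hval]
  rw [if_neg hxy]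
  omega

/-- Reading `H` as the columns of a generator matrix, `weight H a` is the Hamming weight of the
codeword of `a`, and `IsDivisible r H` below says that this code is `2^r`-divisible. -/
def weight (H : Finset (Fin v → ZMod 2)) (a : Fin v → ZMod 2) : ℕ :=
  ∑ x ∈ H, (a ⬝ᵥ x).val

theorem weight_le_card (H : Finset (Fin v → ZMod 2)) (a : Fin v → ZMod 2) :
    weight H a ≤ H.card :=
  card_eq_sum_ones H ▸ sum_le_sum fun _ _ => Nat.le_of_lt_succ (ZMod.val_lt _)

theorem two_mul_sum_weight {H : Finset (Fin v → ZMod 2)} (h0 : 0 ∉ H) :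
    2 * ∑ a, weight H a = H.card * 2 ^ v := by
  simp only [weight]
  rw [sum_comm, mul_sum, card_eq_sum_ones, sum_mul]
  exact sum_congr rfl fun x hx => by
    rw [one_mul, two_mul_sum_val_dotProduct (ne_of_mem_of_not_mem hx h0)]

theorem four_mul_sum_weight_sq {H : Finset (Fin v → ZMod 2)} (h0 : 0 ∉ H) :
    4 * ∑ a, weight H a ^ 2 = H.card * (H.card + 1) * 2 ^ v := by
  have hsq : ∀ a, weight H a ^ 2 = ∑ x ∈ H, ∑ y ∈ H, (a ⬝ᵥ x).val * (a ⬝ᵥ y).val := fun a => by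
    rw [sq, weight, sum_mul_sum]
  calc 4 * ∑ a, weight H a ^ 2
      = ∑ x ∈ H, ∑ y ∈ H, 4 * ∑ a, (a ⬝ᵥ x).val * (a ⬝ᵥ y).val := by
        simp only [hsq, mul_sum]
        rw [sum_comm]
        exact sum_congr rfl fun x _ => sum_comm
    _ = ∑ x ∈ H, ∑ y ∈ H, (2 ^ v + if x = y then 2 ^ v else 0) :=
        sum_congr rfl fun x hx => sum_congr rfl fun y hy => four_mul_sum_val_mul_val
          (ne_of_mem_of_not_mem hx h0) (ne_of_mem_of_not_mem hy h0)
    _ = ∑ x ∈ H, (H.card * 2 ^ v + 2 ^ v) := sum_congr rfl fun x hx => by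
        rw [sum_add_distrib, sum_const, sum_ite_eq, if_pos hx, smul_eq_mul]
    _ = H.card * (H.card + 1) * 2 ^ v := by
        rw [sum_const, smul_eq_mul]
        ring

theorem two_mul_add_mul_card_le {H : Finset (Fin v → ZMod 2)} (h0 : 0 ∉ H) {c d : ℕ}
    (hcd : c ≤ d) (hgap : ∀ a, weight H a ≤ c ∨ d ≤ weight H a) :
    2 * (c + d) * H.card ≤ H.card * (H.card + 1) + 4 * c * d := by
  have hpoint : ∀ a, (c + d) * weight H a ≤ weight H a ^ 2 + c * d := fun a => by
    rcases hgap a with h | h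
    · nlinarith [Nat.mul_le_mul h (h.trans hcd)]
    · nlinarith [Nat.mul_le_mul (hcd.trans h) h]
  have hsum := sum_le_sum fun a (_ : a ∈ univ) => hpoint a
  rw [← mul_sum, sum_add_distrib, sum_const, card_univ, Fintype.card_fun, ZMod.card,
    Fintype.card_fin, smul_eq_mul] at hsum
  have h1 := two_mul_sum_weight h0
  have h2 := four_mul_sum_weight_sq h0
  refine Nat.le_of_mul_le_mul_right ?_ (pow_pos two_pos v)
  nlinarith

theorem card_lt_of_weight_le {H : Finset (Fin v → ZMod 2)} (h0 : 0 ∉ H) {c : ℕ} (hc : 0 < c)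
    (hle : ∀ a ≠ 0, weight H a ≤ c) : H.card < 2 * c := by
  have hsum : ∑ a ∈ univ.erase 0, weight H a ≤ (2 ^ v - 1) * c := by
    have := sum_le_card_nsmul (univ.erase 0) _ c fun a ha => hle a (ne_of_mem_erase ha)
    simpa [card_erase_of_mem, card_univ] using this
  have hzero : weight H 0 = 0 := by simp [weight]
  have h1 := two_mul_sum_weight h0
  rw [← add_sum_erase _ _ (mem_univ 0), hzero, zero_add] at h1
  have hv : 1 ≤ 2 ^ v := Nat.one_le_two_pow
  refine Nat.lt_of_mul_lt_mul_right (a := 2 ^ v) ?_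
  calc H.card * 2 ^ v ≤ 2 * ((2 ^ v - 1) * c) := by omega
    _ < 2 * c * 2 ^ v := by
      have := Nat.mul_lt_mul_of_pos_right (Nat.sub_lt hv one_pos) hc
      linarith

theorem card_filter_add_weight (H : Finset (Fin v → ZMod 2)) (b : Fin v → ZMod 2) :
    (H.filter fun x => b ⬝ᵥ x = 0).card + weight H b = H.card := by
  have hval : ∀ t : ZMod 2, (if t = 0 then 1 else 0) + t.val = 1 := by decide
  rw [card_filter, weight, ← sum_add_distrib, card_eq_sum_ones]
  exact sum_congr rfl fun x _ => hval _

theorem two_mul_weight_filter_add_weight (H : Finset (Fin v → ZMod 2)) (a b : Fin v → ZMod 2) :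
    2 * weight (H.filter fun x => b ⬝ᵥ x = 0) a + weight H b = weight H a + weight H (a + b) := by
  have hval : ∀ s t : ZMod 2, 2 * (if t = 0 then s.val else 0) + t.val = s.val + (s + t).val := by
    decide
  simp only [weight, sum_filter, mul_sum, ← sum_add_distrib, add_dotProduct, hval]

def IsDivisible (r : ℕ) (H : Finset (Fin v → ZMod 2)) : Prop :=
  ∀ a, 2 ^ r ∣ weight H a

namespace IsDivisible

variable {r : ℕ} {H : Finset (Fin v → ZMod 2)}

theorem filter (hD : IsDivisible (r + 1) H) (b : Fin v → ZMod 2) :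
    IsDivisible r (H.filter fun x => b ⬝ᵥ x = 0) := fun a =>
  Nat.two_pow_pred_dvd_of_dvd_two_mul <| (Nat.dvd_add_left (hD b)).mp <|
    two_mul_weight_filter_add_weight H a b ▸ dvd_add (hD a) (hD (a + b))

theorem exists_section (hD : IsDivisible (r + 1) H) (h0 : 0 ∉ H) (b : Fin v → ZMod 2) :
    ∃ H' : Finset (Fin v → ZMod 2), 0 ∉ H' ∧ IsDivisible r H' ∧ H'.card + weight H b = H.card :=
  ⟨_, fun h => h0 (mem_of_mem_filter 0 h), hD.filter b, card_filter_add_weight H b⟩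

theorem weight_le_or_le (hD : IsDivisible r H) (a : Fin v → ZMod 2) (k : ℕ) :
    weight H a ≤ k * 2 ^ r ∨ (k + 1) * 2 ^ r ≤ weight H a := by
  obtain ⟨m, hm⟩ := hD a
  rw [hm, mul_comm]
  rcases le_or_gt m k with h | h
  · exact .inl (Nat.mul_le_mul_right _ h)
  · exact .inr (Nat.mul_le_mul_right _ h)

theorem two_pow_succ_le_card_add_one (hD : IsDivisible r H) (h0 : 0 ∉ H) (hH : H.Nonempty) :
    2 ^ (r + 1) ≤ H.card + 1 := by
  have := two_mul_add_mul_card_le h0 (by simp) (hD.weight_le_or_le · 0)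
  rw [pow_succ']
  have : 0 < H.card := hH.card_pos
  nlinarith

theorem card_ne_nine (hD : IsDivisible 2 H) (h0 : 0 ∉ H) : H.card ≠ 9 := by
  intro hcard
  refine absurd (card_lt_of_weight_le h0 (c := 4) (by norm_num) fun a _ => ?_) (by omega)
  obtain ⟨H', h0', hD', hsec⟩ := hD.exists_section h0 a
  have hne : weight H a ≠ 8 := fun h8 => by
    have := hD'.two_pow_succ_le_card_add_one h0' (card_pos.mp (by omega))
    omega
  rcases hD.weight_le_or_le a 1 with h | h
  · omega
  · have := weight_le_card H a
    have := hD a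
    omega

theorem card_ne_thirtyThree (hD : IsDivisible 3 H) (h0 : 0 ∉ H) : H.card ≠ 33 := by
  intro hcard
  refine absurd (card_lt_of_weight_le h0 (c := 16) (by norm_num) fun a _ => ?_) (by omega)
  obtain ⟨H', h0', hD', hsec⟩ := hD.exists_section h0 a
  have h24 : weight H a ≠ 24 := fun h => hD'.card_ne_nine h0' (by omega)
  have h32 : weight H a ≠ 32 := fun h => by
    have := hD'.two_pow_succ_le_card_add_one h0' (card_pos.mp (by omega))
    omega
  have := weight_le_card H a
  obtain ⟨m, hm⟩ := hD a
  omega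

theorem card_not_mem (hD : IsDivisible 3 H) (h0 : 0 ∉ H) :
    H.card ∉ ({1, 3, 7, 18, 22, 33, 37} : Finset ℕ) := by
  have hmin := hD.two_pow_succ_le_card_add_one h0
  have hquad (k : ℕ) := two_mul_add_mul_card_le h0 (by gcongr; omega) (hD.weight_le_or_le · k)
  simp only [mem_insert, mem_singleton]
  rintro (h | h | h | h | h | h | h)
  · simpa [h] using hmin (card_pos.mp (by omega))
  · simpa [h] using hmin (card_pos.mp (by omega))
  · simpa [h] using hmin (card_pos.mp (by omega))
  · simpa [h] using hquad 1
  · simpa [h] using hquad 1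
  · exact hD.card_ne_thirtyThree h0 h
  · simpa [h] using hquad 2

end IsDivisible

section Holes

variable {K V : Type*} [Field K] [AddCommGroup V] [Module K V] [Fintype V]

open scoped Classical in
noncomputable def holes (S : Finset (Submodule K V)) : Finset V :=
  univ.filter fun x => x ≠ 0 ∧ ∀ U ∈ S, x ∉ U

theorem zero_notMem_holes (S : Finset (Submodule K V)) : 0 ∉ holes S := by
  simp [holes]

open scoped Classical in
theorem sum_eq_sum_holes_add_sum_sum {M : Type*} [AddCommMonoid M] {S : Finset (Submodule K V)}
    (hS : (S : Set (Submodule K V)).Pairwise Disjoint) (f : V → M) (hf : f 0 = 0) :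
    ∑ x, f x = ∑ x ∈ holes S, f x + ∑ U ∈ S, ∑ x : U, f x := by
  have hsub : ∀ U : Submodule K V, ∑ x : U, f x = ∑ x, if x ∈ U then f x else 0 := fun U => by
    rw [← sum_filter]
    exact (sum_subtype _ (by simp) f).symm
  simp only [hsub, holes, sum_filter]
  rw [sum_comm, ← sum_add_distrib]
  refine sum_congr rfl fun x _ => ?_
  by_cases hx : x = 0
  · simp [hx, hf]
  by_cases hcov : ∀ U ∈ S, x ∉ U
  · rw [if_pos ⟨hx, hcov⟩, sum_eq_zero fun U hU => if_neg (hcov U hU), add_zero]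
  obtain ⟨U, hU, hxU⟩ : ∃ U ∈ S, x ∈ U := by simpa using hcov
  have hrest : ∀ W ∈ S, W ≠ U → x ∉ W := fun W hW hWU hxW =>
    hx ((Submodule.disjoint_def.mp (hS hW hU hWU)) x hxW hxU)
  rw [if_neg fun h => hcov h.2, sum_eq_single_of_mem U hU fun W hW hWU => if_neg (hrest W hW hWU),
    if_pos hxU, zero_add]

theorem card_holes_add_card_mul [Fintype K] {k : ℕ} {S : Finset (Submodule K V)}
    (hS : IsPartialSpreadOver K k S) :
    (holes S).card + S.card * (Fintype.card K ^ k - 1) = Fintype.card V - 1 := by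
  classical
  have key := sum_eq_sum_holes_add_sum_sum hS.2 (fun x : V => if x ≠ 0 then (1 : ℕ) else 0)
    (if_neg (by simp))
  have hU : ∀ U ∈ S, ∑ x : U, (if (x : V) ≠ 0 then (1 : ℕ) else 0) = Fintype.card K ^ k - 1 := by
    intro U hU
    rw [← hS.1 U hU, ← Module.card_eq_pow_finrank]
    simp only [ne_eq, ZeroMemClass.coe_eq_zero]
    rw [sum_boole, filter_ne', card_erase_of_mem (mem_univ _), card_univ, Nat.cast_id]
  have hH : ∀ x ∈ holes S, (if x ≠ 0 then (1 : ℕ) else 0) = 1 := fun x hx =>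
    if_pos (ne_of_mem_of_not_mem hx (zero_notMem_holes S))
  rw [sum_congr rfl hU, sum_congr rfl hH] at key
  rw [sum_boole, filter_ne', card_erase_of_mem (mem_univ _), card_univ, Nat.cast_id] at key
  simp only [sum_const, smul_eq_mul, mul_one] at key
  omega

end Holes

theorem two_pow_pred_dvd_sum_val (U : Submodule (ZMod 2) (Fin v → ZMod 2)) [Fintype U]
    (b : Fin v → ZMod 2) :
    2 ^ (finrank (ZMod 2) U - 1) ∣ ∑ x : U, (b ⬝ᵥ (x : Fin v → ZMod 2)).val := by
  by_cases h : ∃ x₀ : U, b ⬝ᵥ (x₀ : Fin v → ZMod 2) = 1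
  · obtain ⟨x₀, hx₀⟩ := h
    refine Nat.two_pow_pred_dvd_of_dvd_two_mul ?_
    rw [two_mul_sum_val_eq_card _ x₀ fun x => by simp [dotProduct_add, hx₀],
      card_eq_pow_finrank (K := ZMod 2), ZMod.card]
  · have h0 : ∀ x : U, (b ⬝ᵥ (x : Fin v → ZMod 2)).val = 0 := fun x => by
      have h01 : ∀ t : ZMod 2, t ≠ 1 → t.val = 0 := by decide
      exact h01 _ fun h1 => h ⟨x, h1⟩
    simp [h0]

theorem isDivisible_holes {k : ℕ} (hkv : k ≤ v) {S : Finset (Submodule (ZMod 2) (Fin v → ZMod 2))}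
    (hS : IsPartialSpreadOver (ZMod 2) k S) : IsDivisible (k - 1) (holes S) := by
  classical
  intro b
  by_cases hb : b = 0
  · simp [weight, hb]
  have key := sum_eq_sum_holes_add_sum_sum hS.2 (fun x => (b ⬝ᵥ x).val) (by simp)
  have htotal : 2 ^ (k - 1) ∣ ∑ x, (b ⬝ᵥ x).val := by
    refine Nat.two_pow_pred_dvd_of_dvd_two_mul ?_
    simp only [dotProduct_comm b, two_mul_sum_val_dotProduct hb]
    exact pow_dvd_pow 2 hkv
  have hspread : 2 ^ (k - 1) ∣ ∑ U ∈ S, ∑ x : U, (b ⬝ᵥ (x : Fin v → ZMod 2)).val :=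
    dvd_sum fun U hU => hS.1 U hU ▸ two_pow_pred_dvd_sum_val U b
  rw [key] at htotal
  exact (Nat.dvd_add_left hspread).mp htotal

theorem exists_card_holes_not_mem (hv : 4 ≤ v) {S : Finset (Submodule (ZMod 2) (Fin v → ZMod 2))}
    (hS : IsPartialSpread 4 S) :
    ∃ h ∉ ({1, 3, 7, 18, 22, 33, 37} : Finset ℕ), 15 * S.card + h = 2 ^ v - 1 := by
  rw [isPartialSpread_iff] at hS
  refine ⟨(holes S).card, (isDivisible_holes hv hS).card_not_mem (zero_notMem_holes S), ?_⟩
  have := card_holes_add_card_mul hS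
  simp only [ZMod.card, Fintype.card_fun, Fintype.card_fin] at this
  omega

end PartialSpread

namespace IsPartialSpreadOver

variable {K V W : Type*} [Field K] [AddCommGroup V] [Module K V] [AddCommGroup W] [Module K W]
  {k : ℕ}

theorem map [DecidableEq (Submodule K W)] {S : Finset (Submodule K V)}
    (hS : IsPartialSpreadOver K k S) {f : V →ₗ[K] W} (hf : Function.Injective f) :
    IsPartialSpreadOver K k (S.image (Submodule.map f)) := by
  refine ⟨?_, ?_⟩
  · simp only [mem_image, forall_exists_index, and_imp]
    rintro _ U hU rfl
    rw [← (Submodule.equivMapOfInjective f hf U).finrank_eq, hS.1 U hU]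
  · rw [coe_image]
    exact Set.Pairwise.image (hS.2.mono' fun U W h => Submodule.disjoint_map hf h)

theorem union [DecidableEq (Submodule K V)] {S T : Finset (Submodule K V)}
    (hS : IsPartialSpreadOver K k S) (hT : IsPartialSpreadOver K k T)
    (hST : ∀ U ∈ S, ∀ W ∈ T, Disjoint U W) : IsPartialSpreadOver K k (S ∪ T) := by
  refine ⟨fun U hU => (mem_union.mp hU).elim (hS.1 U) (hT.1 U), ?_⟩
  rw [coe_union, Set.pairwise_union_of_symm]
  exact ⟨hS.2, hT.2, fun U hU W hW _ => hST U hU W hW⟩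

theorem card_union [DecidableEq (Submodule K V)] (hk : k ≠ 0) {S T : Finset (Submodule K V)}
    (hS : IsPartialSpreadOver K k S) (hST : ∀ U ∈ S, ∀ W ∈ T, Disjoint U W) :
    (S ∪ T).card = S.card + T.card := by
  refine card_union_of_disjoint (disjoint_left.mpr fun U hU hU' => hk ?_)
  rw [← hS.1 U hU, disjoint_self.mp (hST U hU U hU'), finrank_bot]

end IsPartialSpreadOver

namespace LinearMap

variable {K V W : Type*} [Field K] [AddCommGroup V] [Module K V] [AddCommGroup W] [Module K W]

theorem finrank_graph (f : V →ₗ[K] W) : finrank K f.graph = finrank K V := by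
  rw [graph_eq_range_prod]
  exact finrank_range_of_inj fun x y h => congrArg Prod.fst h

theorem disjoint_graph_graph {f g : V →ₗ[K] W} (h : ∀ x, f x = g x → x = 0) :
    Disjoint f.graph g.graph := by
  rw [Submodule.disjoint_def]
  rintro ⟨x, y⟩ hf hg
  simp only [mem_graph_iff] at hf hg
  simp [h x (hf.symm.trans hg), hf]

theorem disjoint_graph_of_le_ker_fst (f : V →ₗ[K] W) {U : Submodule K (V × W)}
    (hU : U ≤ ker (fst K V W)) : Disjoint f.graph U := by
  rw [Submodule.disjoint_def]
  rintro ⟨x, y⟩ hf hU'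
  simp only [mem_graph_iff] at hf
  simp [show x = 0 from hU hU', hf]

end LinearMap

namespace PartialSpread

section Construction

variable {K V L : Type*} [Field K] [AddCommGroup V] [Module K V] [Field L] [Algebra K L]
  [Fintype L] [DecidableEq (Submodule K (V × L))] {ι : V →ₗ[K] L}

theorem isPartialSpreadOver_graph_smul (hι : Function.Injective ι) :
    IsPartialSpreadOver K (finrank K V) (univ.image fun a : L => (a • ι).graph) := by
  refine ⟨?_, ?_⟩
  · simp only [mem_image, mem_univ, true_and, forall_exists_index]
    rintro _ a rfl
    exact LinearMap.finrank_graph _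
  · rw [coe_image]
    refine Set.Pairwise.image fun a _ b _ hab => LinearMap.disjoint_graph_graph fun x hx => ?_
    refine (injective_iff_map_eq_zero ι).mp hι x ?_
    simp only [LinearMap.smul_apply, smul_eq_mul] at hx
    exact (mul_eq_mul_right_iff.mp hx).resolve_left hab

theorem card_image_graph_smul [Nontrivial V] (hι : Function.Injective ι) :
    (univ.image fun a : L => (a • ι).graph).card = Fintype.card L := by
  refine card_image_of_injective _ fun a b hab => ?_
  obtain ⟨x, hx⟩ := exists_ne (0 : V)
  have hmem : (x, a * ι x) ∈ (b • ι).graph := hab ▸ rfl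
  exact mul_right_cancel₀ (fun h => hx ((injective_iff_map_eq_zero ι).mp hι x h)) hmem

theorem exists_isPartialSpreadOver_prod [FiniteDimensional K V] [Nontrivial V]
    (hι : Function.Injective ι) {S : Finset (Submodule K L)} (hS : IsPartialSpreadOver K (finrank K V) S) :
    ∃ T : Finset (Submodule K (V × L)),
      IsPartialSpreadOver K (finrank K V) T ∧ T.card = Fintype.card L + S.card := by
  have hG := isPartialSpreadOver_graph_smul hι
  have hS' := hS.map (LinearMap.inr_injective (R := K) (M := V) (M₂ := L))
  have hGS' : ∀ U ∈ univ.image fun a : L => (a • ι).graph,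
      ∀ W ∈ S.image (Submodule.map (LinearMap.inr K V L)), Disjoint U W := by
    simp only [mem_image, mem_univ, true_and]
    rintro _ ⟨a, rfl⟩ _ ⟨W, -, rfl⟩
    refine LinearMap.disjoint_graph_of_le_ker_fst _ ?_
    rintro _ ⟨x, -, rfl⟩
    simp
  refine ⟨_, hG.union hS' hGS', ?_⟩
  rw [hG.card_union finrank_pos.ne' hGS', card_image_graph_smul hι,
    card_image_of_injective _ (Submodule.map_injective_of_injective LinearMap.inr_injective)]

end Construction

theorem exists_isPartialSpreadOver_card_eq_pow_add (p : ℕ) [Fact p.Prime] {k N : ℕ} (hk : k ≠ 0)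
    (hkN : k ≤ N) {S : Finset (Submodule (ZMod p) (Fin N → ZMod p))}
    (hS : IsPartialSpreadOver (ZMod p) k S) :
    ∃ T : Finset (Submodule (ZMod p) (Fin (N + k) → ZMod p)),
      IsPartialSpreadOver (ZMod p) k T ∧ T.card = p ^ N + S.card := by
  classical
  have hN : N ≠ 0 := by omega
  let L := GaloisField p N
  have : Fintype L := Fintype.ofFinite L
  have : Nonempty (Fin k) := ⟨⟨0, Nat.pos_of_ne_zero hk⟩⟩
  have hrank : finrank (ZMod p) L = N := GaloisField.finrank p hN
  obtain ⟨eL⟩ : Nonempty ((Fin N → ZMod p) ≃ₗ[ZMod p] L) :=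
    FiniteDimensional.nonempty_linearEquiv_of_finrank_eq (by simp [hrank])
  obtain ⟨ι, hι⟩ : ∃ ι : (Fin k → ZMod p) →ₗ[ZMod p] L, Function.Injective ι :=
    finrank_le_iff_exists_linearMap.mp (by simpa [hrank])
  obtain ⟨e⟩ : Nonempty (((Fin k → ZMod p) × L) ≃ₗ[ZMod p] (Fin (N + k) → ZMod p)) :=
    FiniteDimensional.nonempty_linearEquiv_of_finrank_eq (by simp [hrank, add_comm])
  obtain ⟨T, hT, hcard⟩ := exists_isPartialSpreadOver_prod hι
    (by simpa using hS.map eL.injective)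
  refine ⟨T.image (Submodule.map e.toLinearMap), by simpa using hT.map e.injective, ?_⟩
  rw [card_image_of_injective _ (Submodule.map_injective_of_injective e.injective), hcard,
    ← Nat.card_eq_fintype_card, GaloisField.card p N hN,
    card_image_of_injective _ (Submodule.map_injective_of_injective eL.injective)]

theorem exists_isPartialSpreadOver_card (p : ℕ) [Fact p.Prime] {k : ℕ} (hk : k ≠ 0) :
    ∀ n, k ≤ n → ∃ S : Finset (Submodule (ZMod p) (Fin n → ZMod p)),
      IsPartialSpreadOver (ZMod p) k S ∧ p ^ (n % k + k) + (p ^ k - 1) * S.card + 1 = p ^ n + p ^ k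
  | n, hkn => by
    have hpk : 1 ≤ p ^ k := Nat.one_le_pow _ _ (Fact.out : p.Prime).pos
    by_cases hn : n < 2 * k
    · have hmod : n % k = n - k := by rw [Nat.mod_eq_sub_mod hkn, Nat.mod_eq_of_lt (by omega)]
      obtain ⟨f, hf⟩ : ∃ f : (Fin k → ZMod p) →ₗ[ZMod p] (Fin n → ZMod p), Function.Injective f :=
        finrank_le_iff_exists_linearMap.mp (by simpa)
      refine ⟨{LinearMap.range f}, ⟨by simp [LinearMap.finrank_range_of_inj hf], by simp⟩, ?_⟩
      rw [card_singleton, hmod, Nat.sub_add_cancel hkn]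
      omega
    · obtain ⟨N, rfl⟩ := Nat.exists_eq_add_of_le' (show k ≤ n by omega)
      obtain ⟨S, hS, hcard⟩ := exists_isPartialSpreadOver_card p hk N (by omega)
      obtain ⟨T, hT, hTcard⟩ := exists_isPartialSpreadOver_card_eq_pow_add p hk (by omega) hS
      refine ⟨T, hT, ?_⟩
      rw [hTcard]
      obtain ⟨q, hq⟩ := Nat.exists_eq_add_of_le' hpk
      rw [Nat.add_mod_right, pow_add p N k]
      rw [hq, Nat.add_sub_cancel] at hcard ⊢
      linear_combination hcard

theorem exists_isPartialSpread_four_card (m i : ℕ) (hm : 1 ≤ m) (hi : i < 4) :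
    ∃ S : Finset (Submodule (ZMod 2) (Fin (4 * m + i) → ZMod 2)),
      IsPartialSpread 4 S ∧ 2 ^ (i + 4) + 15 * S.card = 2 ^ (4 * m + i) + 15 := by
  have : Fact (Nat.Prime 2) := ⟨Nat.prime_two⟩
  obtain ⟨S, hS, hcard⟩ := exists_isPartialSpreadOver_card 2 (k := 4) (by norm_num) _
    (show 4 ≤ 4 * m + i by omega)
  rw [show (4 * m + i) % 4 = i by omega] at hcard
  exact ⟨S, isPartialSpread_iff.mpr hS, by omega⟩

end PartialSpread

open PartialSpread in
/-- Maximum sizes of partial `4`-spreads in `𝔽_2^{4m}`, `𝔽_2^{4m+1}`, `𝔽_2^{4m+2}`,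
and bounds for `𝔽_2^{4m+3}`. -/
theorem partial_four_spread_max (m : ℕ) (hm : 2 ≤ m) :
    IsGreatest {c : ℕ | ∃ S : Finset (Submodule (ZMod 2) (Fin (4 * m) → ZMod 2)),
        IsPartialSpread 4 S ∧ S.card = c} ((2 ^ (4 * m) - 1) / 15) ∧
    IsGreatest {c : ℕ | ∃ S : Finset (Submodule (ZMod 2) (Fin (4 * m + 1) → ZMod 2)),
        IsPartialSpread 4 S ∧ S.card = c} ((2 ^ (4 * m + 1) - 17) / 15) ∧
    IsGreatest {c : ℕ | ∃ S : Finset (Submodule (ZMod 2) (Fin (4 * m + 2) → ZMod 2)),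
        IsPartialSpread 4 S ∧ S.card = c} ((2 ^ (4 * m + 2) - 49) / 15) ∧
    (∃ S : Finset (Submodule (ZMod 2) (Fin (4 * m + 3) → ZMod 2)),
        IsPartialSpread 4 S ∧ (2 ^ (4 * m + 3) - 113) / 15 ≤ S.card) ∧
    (∀ S : Finset (Submodule (ZMod 2) (Fin (4 * m + 3) → ZMod 2)),
        IsPartialSpread 4 S → S.card ≤ (2 ^ (4 * m + 3) - 53) / 15) := by
  have hres (i : ℕ) : 2 ^ (4 * m + i) % 15 = 2 ^ i % 15 := by
    rw [pow_add, pow_mul, Nat.mul_mod, Nat.pow_mod]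
    norm_num
  have h0 : 2 ^ (4 * m) % 15 = 1 := hres 0
  have h1 : 2 ^ (4 * m + 1) % 15 = 2 := hres 1
  have h2 : 2 ^ (4 * m + 2) % 15 = 4 := hres 2
  have h3 : 2 ^ (4 * m + 3) % 15 = 8 := hres 3
  refine ⟨⟨?_, ?_⟩, ⟨?_, ?_⟩, ⟨?_, ?_⟩, ?_, ?_⟩
  · obtain ⟨S, hS, hcard : 2 ^ 4 + 15 * S.card = 2 ^ (4 * m) + 15⟩ :=
      exists_isPartialSpread_four_card m 0 (by omega) (by norm_num)
    exact ⟨S, hS, by omega⟩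
  · rintro _ ⟨S, hS, rfl⟩
    obtain ⟨h, -, hcard⟩ := exists_card_holes_not_mem (by omega) hS
    omega
  · obtain ⟨S, hS, hcard⟩ := exists_isPartialSpread_four_card m 1 (by omega) (by norm_num)
    exact ⟨S, hS, by omega⟩
  · rintro _ ⟨S, hS, rfl⟩
    obtain ⟨h, hh, hcard⟩ := exists_card_holes_not_mem (by omega) hS
    simp only [mem_insert, mem_singleton, not_or] at hh
    omega
  · obtain ⟨S, hS, hcard⟩ := exists_isPartialSpread_four_card m 2 (by omega) (by norm_num)
    exact ⟨S, hS, by omega⟩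
  · rintro _ ⟨S, hS, rfl⟩
    obtain ⟨h, hh, hcard⟩ := exists_card_holes_not_mem (by omega) hS
    simp only [mem_insert, mem_singleton, not_or] at hh
    omega
  · obtain ⟨S, hS, hcard⟩ := exists_isPartialSpread_four_card m 3 (by omega) (by norm_num)
    exact ⟨S, hS, by omega⟩
  · intro S hS
    obtain ⟨h, hh, hcard⟩ := exists_card_holes_not_mem (by omega) hS
    simp only [mem_insert, mem_singleton, not_or] at hh
    omega
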